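/- arXiv:1903.02191 — 9 statements merged into one kernel-verified Lean document; each statement's English description precedes it below -/
import Mathlib

section
/- Let f : ℝ → ℝ be a probability density function that is symmetric about c (i.e., f(c - x) = f(c + x) for all x) and unimodal with mode c (i.e., f is nonnegative, differentiable, f'(x) ≥ 0 for x < c, f'(c) = 0, and f'(x) ≤ 0 for x > c). For a ≤ b, define H(s) = ∫_{a}^{b} f(x - s) dx. Then H attains its maximum over ℝ at s_max = (a+b)/2 - c. -/
open MeasureTheory

/-- For a symmetric, unimodal (about mode `c`) probability density `f`,
the shifted mass `H s = ∫ x in a..b, f (x - s)` attains its maximum over ℝ at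
`s_max = (a+b)/2 - c`. -/
theorem stmt_0
    (f : ℝ → ℝ) (c : ℝ)
    (hdiff : Differentiable ℝ f)
    (hnonneg : ∀ x, 0 ≤ f x)
    (hint : Integrable f)
    (hone : ∫ x, f x = 1)
    (hsym : ∀ x, f (c - x) = f (c + x))
    (hup : ∀ x < c, 0 ≤ deriv f x)
    (hmode : deriv f c = 0)
    (hdown : ∀ x > c, deriv f x ≤ 0)
    (a b : ℝ) (hab : a ≤ b) :
    ∀ s : ℝ, (∫ x in a..b, f (x - s)) ≤ ∫ x in a..b, f (x - ((a + b) / 2 - c)) := by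
  set g : ℝ → ℝ := fun x => f (x + c) with hg
  set h : ℝ := (b - a) / 2 with hh
  have hh0 : 0 ≤ h := by simp [hh]; linarith
  -- g is even
  have hg_even : ∀ x, g (-x) = g x := by
    intro x
    have := hsym x
    simp only [hg]
    rw [show -x + c = c - x by ring, show x + c = c + x by ring]
    exact this
  -- f is antitone on [c, ∞)
  have hf_anti : AntitoneOn f (Set.Ici c) := by
    apply antitoneOn_of_deriv_nonpos (convex_Ici c) hdiff.continuous.continuousOn
    · intro x hx
      exact (hdiff x).differentiableWithinAt
    · intro x hx
      rw [interior_Ici] at hx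
      exact hdown x hx
  have hg_anti : ∀ u v : ℝ, 0 ≤ u → u ≤ v → g v ≤ g u := by
    intro u v hu huv
    exact hf_anti (by simpa using hu) (by simp; linarith) (by linarith)
  -- g x = g |x|
  have hg_abs : ∀ x : ℝ, g x = g |x| := by
    intro x
    rcases le_or_gt 0 x with hx | hx
    · rw [abs_of_nonneg hx]
    · rw [abs_of_neg hx, ← hg_even x]
  -- key pointwise bound
  have key : ∀ x : ℝ, -h ≤ x → g (x + 2 * h) ≤ g x := by
    intro x hx
    rw [hg_abs x]
    apply hg_anti |x| (x + 2 * h) (abs_nonneg x)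
    rcases abs_cases x with ⟨he, _⟩ | ⟨he, _⟩ <;> rw [he] <;> linarith
  -- interval integrability of g
  have hg_int : ∀ u v : ℝ, IntervalIntegrable g volume u v := by
    intro u v
    exact (hint.comp_add_right c).intervalIntegrable
  -- φ
  set φ : ℝ → ℝ := fun t => ∫ x in (t - h)..(t + h), g x with hφ
  -- φ is even
  have hφ_even : ∀ t, φ (-t) = φ t := by
    intro t
    simp only [hφ]
    have : ∀ x, g x = g (-x) := fun x => (hg_even x).symm
    rw [intervalIntegral.integral_congr (g := fun x => g (-x)) (fun x _ => this x),
      intervalIntegral.integral_comp_neg g]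
    congr 1 <;> ring
  -- main: φ t ≤ φ 0 for t ≥ 0
  have hmain : ∀ t : ℝ, 0 ≤ t → φ t ≤ φ 0 := by
    intro t ht
    simp only [hφ]
    have split0 : (∫ x in (-h)..(t - h), g x) + ∫ x in (t - h)..(h), g x
        = ∫ x in (-h)..(h), g x :=
      intervalIntegral.integral_add_adjacent_intervals (hg_int _ _) (hg_int _ _)
    have splitT : (∫ x in (t - h)..(h), g x) + ∫ x in (h)..(t + h), g x
        = ∫ x in (t - h)..(t + h), g x :=
      intervalIntegral.integral_add_adjacent_intervals (hg_int _ _) (hg_int _ _)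
    have hshift : (∫ x in (h)..(t + h), g x)
        = ∫ x in (-h)..(t - h), g (x + 2 * h) := by
      rw [intervalIntegral.integral_comp_add_right g (2 * h)]
      norm_num
      ring_nf
    have hmono : (∫ x in (-h)..(t - h), g (x + 2 * h))
        ≤ ∫ x in (-h)..(t - h), g x := by
      apply intervalIntegral.integral_mono_on (by linarith)
      · exact ((hint.comp_add_right c).comp_add_right (2 * h)).intervalIntegrable
      · exact hg_int _ _
      · intro x hx
        exact key x hx.1
    have : (∫ x in (h)..(t + h), g x) ≤ ∫ x in (-h)..(t - h), g x := by
      rw [hshift]; exact hmono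
    have h0 : (0 : ℝ) - h = -h := by ring
    have h0' : (0 : ℝ) + h = h := by ring
    rw [h0, h0']
    linarith
  have hφ_max : ∀ t : ℝ, φ t ≤ φ 0 := by
    intro t
    rcases le_or_gt 0 t with ht | ht
    · exact hmain t ht
    · rw [← hφ_even t]; exact hmain (-t) (by linarith)
  -- reduce original integrals to φ
  intro s
  have hred : ∀ s : ℝ, (∫ x in a..b, f (x - s)) = φ ((a + b) / 2 - s - c) := by
    intro s
    have : ∀ x, f (x - s) = g (x - (s + c)) := by
      intro x; simp only [hg]; ring_nf
    rw [intervalIntegral.integral_congr (fun x _ => this x),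
      intervalIntegral.integral_comp_sub_right g (s + c)]
    simp only [hφ]
    rw [show (a + b) / 2 - s - c - h = a - (s + c) by rw [hh]; ring,
      show (a + b) / 2 - s - c + h = b - (s + c) by rw [hh]; ring]
  rw [hred s, hred ((a + b) / 2 - c)]
  have : (a + b) / 2 - ((a + b) / 2 - c) - c = 0 := by ring
  rw [this]
  exact hφ_max _
end

section
/- Let f : ℝ → ℝ be symmetric about c and unimodal with mode c, let a ≤ b, and define H(s) = ∫_a^b f(x - s) dx and s_max = (a+b)/2 - c. Then H is monotone in distance to s_max: for all s1, s2 ∈ ℝ, if |s_max - s1| ≥ |s_max - s2| then H(s1) ≤ H(s2). -/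
/-!
After the substitution `y = x - s - c`, `H s` is the integral of `g y = f (y + c)` over the window
of half-width `(b - a) / 2` centred at `s_max - s`. Symmetry and unimodality say that `g` is
nonincreasing in `|y|`, so the window integral is even in its centre, and moving the centre
`t ≥ 0` outward trades the slice near `t - d` for a slice near `t + d`, where `g` is smaller.
-/

open MeasureTheory Set

theorem le_of_abs_sub_le_of_symm_of_antitoneOn {f : ℝ → ℝ} {c x y : ℝ}
    (hsym : ∀ x, f (c - x) = f (c + x)) (hanti : AntitoneOn f (Ici c))
    (hxy : |x - c| ≤ |y - c|) : f y ≤ f x := by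
  have hradial : ∀ z, f z = f (c + |z - c|) := fun z => by
    rcases abs_cases (z - c) with ⟨h, _⟩ | ⟨h, _⟩
    · rw [h, add_sub_cancel]
    · rw [h, ← hsym, sub_neg_eq_add, add_sub_cancel]
  rw [hradial x, hradial y]
  exact hanti (by simp) (by simp) (by linarith)

section Window

variable {g : ℝ → ℝ} (hg : ∀ x y, |x| ≤ |y| → g y ≤ g x)
  (hint : ∀ u v, IntervalIntegrable g volume u v)
include hg

theorem integral_sub_add_neg_eq (t d : ℝ) :
    ∫ x in -t - d..-t + d, g x = ∫ x in t - d..t + d, g x := by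
  have heven : ∀ x, g (-x) = g x := fun x =>
    le_antisymm (hg _ _ (abs_neg x).ge) (hg _ _ (abs_neg x).le)
  have hreflect := intervalIntegral.integral_comp_neg (a := t - d) (b := t + d) g
  simp only [heven] at hreflect
  convert hreflect.symm using 2 <;> ring

include hint

theorem integral_sub_add_antitoneOn {d : ℝ} (hd : 0 ≤ d) :
    AntitoneOn (fun t => ∫ x in t - d..t + d, g x) (Ici 0) := by
  intro t' ht' t _ htt'
  simp only [mem_Ici] at ht'
  suffices ∫ u in t'..t, g (u + d) ≤ ∫ u in t'..t, g (u - d) by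
    have hsplit := intervalIntegral.integral_interval_sub_interval_comm
      (hint (t - d) (t + d)) (hint (t' - d) (t' + d)) (hint (t - d) (t' - d))
    rw [intervalIntegral.integral_comp_add_right, intervalIntegral.integral_comp_sub_right,
      intervalIntegral.integral_symm (t + d), intervalIntegral.integral_symm (t - d)] at this
    dsimp only
    linarith
  refine intervalIntegral.integral_mono_on htt' ?_ ?_ fun u hu => hg _ _ ?_
  · simpa using (hint (t' + d) (t + d)).comp_add_right d
  · simpa using (hint (t' - d) (t - d)).comp_sub_right d
  · rw [abs_of_nonneg (by linarith [hu.1] : 0 ≤ u + d)]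
    exact abs_le.mpr ⟨by linarith [hu.1], by linarith⟩

theorem integral_sub_add_le_of_abs_le {d t t' : ℝ} (hd : 0 ≤ d) (htt' : |t'| ≤ |t|) :
    ∫ x in t - d..t + d, g x ≤ ∫ x in t' - d..t' + d, g x := by
  have habs : ∀ s, ∫ x in s - d..s + d, g x = ∫ x in |s| - d..|s| + d, g x := fun s => by
    rcases abs_cases s with ⟨h, _⟩ | ⟨h, _⟩
    · rw [h]
    · rw [h, integral_sub_add_neg_eq hg]
  rw [habs t, habs t']
  exact integral_sub_add_antitoneOn hg hint hd (abs_nonneg t') (abs_nonneg t) htt'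

end Window

theorem stmt_1_general
    (f : ℝ → ℝ) (c : ℝ)
    (hdiff : Differentiable ℝ f)
    (hsym : ∀ x, f (c - x) = f (c + x))
    (hdown : ∀ x > c, deriv f x ≤ 0)
    (a b : ℝ) (hab : a ≤ b) :
    ∀ s1 s2 : ℝ, |((a + b) / 2 - c) - s1| ≥ |((a + b) / 2 - c) - s2| →
      (∫ x in a..b, f (x - s1)) ≤ ∫ x in a..b, f (x - s2) := by
  intro s1 s2 hs
  have hanti : AntitoneOn f (Ici c) :=
    antitoneOn_of_deriv_nonpos (convex_Ici c) hdiff.continuous.continuousOn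
      hdiff.differentiableOn fun x hx => hdown x (by simpa using hx)
  set g : ℝ → ℝ := fun y => f (y + c)
  have hg : ∀ x y, |x| ≤ |y| → g y ≤ g x := fun x y hxy =>
    le_of_abs_sub_le_of_symm_of_antitoneOn (x := x + c) (y := y + c) hsym hanti (by simpa using hxy)
  have hwindow : ∀ s, ∫ x in a..b, f (x - s)
      = ∫ y in ((a + b) / 2 - c - s) - (b - a) / 2..((a + b) / 2 - c - s) + (b - a) / 2, g y :=
    fun s => by
      rw [intervalIntegral.integral_comp_sub_right, intervalIntegral.integral_comp_add_right]
      congr 1 <;> ring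
  rw [hwindow, hwindow]
  exact integral_sub_add_le_of_abs_le hg
    ((hdiff.continuous.comp (continuous_add_const c)).intervalIntegrable)
    (by linarith) hs

/-- `H` is monotone in the distance to `s_max`: if
`|s_max - s1| ≥ |s_max - s2|` then `H s1 ≤ H s2`. -/
theorem stmt_1
    (f : ℝ → ℝ) (c : ℝ)
    (hdiff : Differentiable ℝ f)
    (hnonneg : ∀ x, 0 ≤ f x)
    (hint : Integrable f)
    (hone : ∫ x, f x = 1)
    (hsym : ∀ x, f (c - x) = f (c + x))
    (hup : ∀ x < c, 0 ≤ deriv f x)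
    (hdown : ∀ x > c, deriv f x ≤ 0)
    (a b : ℝ) (hab : a ≤ b) :
    ∀ s1 s2 : ℝ, |((a + b) / 2 - c) - s1| ≥ |((a + b) / 2 - c) - s2| →
      (∫ x in a..b, f (x - s1)) ≤ ∫ x in a..b, f (x - s2) :=
  stmt_1_general f c hdiff hsym hdown a b hab
end

section
/- Let f : ℝ → ℝ be symmetric about c and unimodal with mode c, and let a ≤ b, s_max = (a+b)/2 - c. For any interval [r1, r2] with r1 ≤ r2, the maximum of H(s) = ∫_a^b f(x - s) dx over s ∈ [r1, r2] is attained at the projection of s_max onto [r1, r2], i.e., at s_max if s_max ∈ [r1, r2], at r2 if s_max > r2, and at r1 if s_max < r1. -/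
open MeasureTheory

/-- The maximum of `H s = ∫ x in a..b, f (x - s)` over `s ∈ [r1, r2]`
is attained at the projection of `s_max = (a+b)/2 - c` onto `[r1, r2]`. -/
theorem stmt_2
    (f : ℝ → ℝ) (c : ℝ)
    (hdiff : Differentiable ℝ f)
    (hnonneg : ∀ x, 0 ≤ f x)
    (hint : Integrable f)
    (hone : ∫ x, f x = 1)
    (hsym : ∀ x, f (c - x) = f (c + x))
    (hup : ∀ x < c, 0 ≤ deriv f x)
    (hdown : ∀ x > c, deriv f x ≤ 0)
    (a b r1 r2 : ℝ) (hab : a ≤ b) (hr : r1 ≤ r2) :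
    (if ((a + b) / 2 - c) ∈ Set.Icc r1 r2 then ((a + b) / 2 - c)
      else if ((a + b) / 2 - c) > r2 then r2 else r1) ∈ Set.Icc r1 r2 ∧
    ∀ s ∈ Set.Icc r1 r2,
      (∫ x in a..b, f (x - s)) ≤
        ∫ x in a..b, f (x - (if ((a + b) / 2 - c) ∈ Set.Icc r1 r2 then ((a + b) / 2 - c)
          else if ((a + b) / 2 - c) > r2 then r2 else r1)) := by
  set L := b - a with hLdef
  have hL0 : 0 ≤ L := by rw [hLdef]; linarith
  set smax := (a + b) / 2 - c with hsmax
  have hcont : Continuous f := hdiff.continuous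
  -- f is monotone on (-∞, c]
  have hmono : MonotoneOn f (Set.Iic c) :=
    monotoneOn_of_deriv_nonneg (convex_Iic c) hcont.continuousOn
      (fun x _ => (hdiff x).differentiableWithinAt)
      (fun x hx => hup x (by simpa using hx))
  -- reflection symmetry
  have hsymm : ∀ x, f (2 * c - x) = f x := by
    intro x
    have h := hsym (x - c)
    rw [show c - (x - c) = 2 * c - x by ring, show c + (x - c) = x by ring] at h
    exact h
  -- key pointwise comparison
  have key : ∀ x y : ℝ, |x - c| ≤ |y - c| → f y ≤ f x := by
    intro x y h
    have hx : f x = f (c - |x - c|) := by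
      rcases le_total x c with hxc | hxc
      · rw [abs_of_nonpos (by linarith)]; ring_nf
      · rw [abs_of_nonneg (by linarith)]
        rw [show c - (x - c) = 2 * c - x by ring, hsymm]
    have hy : f y = f (c - |y - c|) := by
      rcases le_total y c with hyc | hyc
      · rw [abs_of_nonpos (by linarith)]; ring_nf
      · rw [abs_of_nonneg (by linarith)]
        rw [show c - (y - c) = 2 * c - y by ring, hsymm]
    rw [hx, hy]
    exact hmono (by simp [abs_nonneg]) (by simp [abs_nonneg]) (by linarith)
  have hII : ∀ u v : ℝ, IntervalIntegrable f volume u v :=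
    fun u v => hint.intervalIntegrable
  have hIIL : ∀ u v : ℝ, IntervalIntegrable (fun x => f (x + L)) volume u v :=
    fun u v => (hint.comp_add_right L).intervalIntegrable
  -- G is decreasing for u ≥ c - L/2
  have Gdec : ∀ u v : ℝ, c - L / 2 ≤ u → u ≤ v →
      (∫ x in v..(v + L), f x) ≤ ∫ x in u..(u + L), f x := by
    intro u v hu huv
    have e1 : (∫ x in u..(u + L), f x) =
        (∫ x in u..v, f x) + ∫ x in v..(u + L), f x :=
      (intervalIntegral.integral_add_adjacent_intervals (hII u v) (hII v (u + L))).symm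
    have e2 : (∫ x in v..(v + L), f x) =
        (∫ x in v..(u + L), f x) + ∫ x in (u + L)..(v + L), f x :=
      (intervalIntegral.integral_add_adjacent_intervals (hII v (u + L)) (hII (u + L) (v + L))).symm
    have e3 : (∫ x in u..v, f (x + L)) = ∫ x in (u + L)..(v + L), f x :=
      intervalIntegral.integral_comp_add_right f L
    have e4 : (∫ x in u..v, f (x + L)) ≤ ∫ x in u..v, f x := by
      apply intervalIntegral.integral_mono_on huv (hIIL u v) (hII u v)
      intro x hx
      apply key x (x + L)
      rw [abs_le]
      have hxu : u ≤ x := hx.1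
      constructor
      · rw [abs_of_nonneg (by linarith)]; linarith
      · rw [abs_of_nonneg (by linarith)]; linarith [abs_nonneg (x - c), le_abs_self (x - c), neg_abs_le (x - c)]
    rw [e1, e2]
    rw [← e3]
    linarith
  -- G is increasing for v ≤ c - L/2
  have Ginc : ∀ u v : ℝ, u ≤ v → v ≤ c - L / 2 →
      (∫ x in u..(u + L), f x) ≤ ∫ x in v..(v + L), f x := by
    intro u v huv hv
    have e1 : (∫ x in u..(u + L), f x) =
        (∫ x in u..v, f x) + ∫ x in v..(u + L), f x :=
      (intervalIntegral.integral_add_adjacent_intervals (hII u v) (hII v (u + L))).symm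
    have e2 : (∫ x in v..(v + L), f x) =
        (∫ x in v..(u + L), f x) + ∫ x in (u + L)..(v + L), f x :=
      (intervalIntegral.integral_add_adjacent_intervals (hII v (u + L)) (hII (u + L) (v + L))).symm
    have e3 : (∫ x in u..v, f (x + L)) = ∫ x in (u + L)..(v + L), f x :=
      intervalIntegral.integral_comp_add_right f L
    have e4 : (∫ x in u..v, f x) ≤ ∫ x in u..v, f (x + L) := by
      apply intervalIntegral.integral_mono_on huv (hII u v) (hIIL u v)
      intro x hx
      apply key (x + L) x
      rw [abs_le]
      have hxv : x ≤ v := hx.2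
      constructor
      · rw [abs_of_nonpos (by linarith)]; linarith
      · rw [abs_of_nonpos (by linarith)]; linarith
    rw [e1, e2, ← e3]
    linarith
  -- H in shifted form
  have Hdef : ∀ s : ℝ, (∫ x in a..b, f (x - s)) = ∫ x in (a - s)..((a - s) + L), f x := by
    intro s
    rw [intervalIntegral.integral_comp_sub_right f s]
    congr 1
    rw [hLdef]; ring
  have hmonoH : ∀ s t : ℝ, s ≤ t → t ≤ smax →
      (∫ x in a..b, f (x - s)) ≤ ∫ x in a..b, f (x - t) := by
    intro s t hst ht
    rw [Hdef s, Hdef t]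
    exact Gdec (a - t) (a - s) (by rw [hsmax] at ht; rw [hLdef]; linarith) (by linarith)
  have hantiH : ∀ s t : ℝ, smax ≤ s → s ≤ t →
      (∫ x in a..b, f (x - t)) ≤ ∫ x in a..b, f (x - s) := by
    intro s t hs hst
    rw [Hdef s, Hdef t]
    exact Ginc (a - t) (a - s) (by linarith) (by rw [hsmax] at hs; rw [hLdef]; linarith)
  by_cases h1 : smax ∈ Set.Icc r1 r2
  · simp only [if_pos h1]
    refine ⟨h1, fun s hs => ?_⟩
    rcases le_total s smax with hcase | hcase
    · exact hmonoH s smax hcase le_rfl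
    · exact hantiH smax s le_rfl hcase
  · simp only [if_neg h1]
    by_cases h2 : smax > r2
    · simp only [if_pos h2]
      refine ⟨⟨hr, le_rfl⟩, fun s hs => ?_⟩
      exact hmonoH s r2 hs.2 (le_of_lt h2)
    · simp only [if_neg h2]
      refine ⟨⟨le_rfl, hr⟩, fun s hs => ?_⟩
      have : smax < r1 := by
        rcases lt_or_ge smax r1 with h | h
        · exact h
        · exact absurd ⟨h, le_of_not_gt h2⟩ h1
      exact hantiH r1 s (le_of_lt this) hs.1
end

section
/- Let f : ℝ → ℝ be symmetric about c and unimodal with mode c, and let a ≤ b, s_max = (a+b)/2 - c. For any interval [r1, r2] with r1 ≤ r2, the minimum of H(s) = ∫_a^b f(x - s) dx over s ∈ [r1, r2] is attained at r1 if s_max ≥ (r1 + r2)/2, and at r2 if s_max < (r1 + r2)/2 (i.e., at the endpoint farthest from s_max). -/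
open MeasureTheory

/-- The minimum of `H s = ∫ x in a..b, f (x - s)` over `s ∈ [r1, r2]`
is attained at `r1` if `s_max ≥ (r1+r2)/2` and at `r2` otherwise (the endpoint
farthest from `s_max = (a+b)/2 - c`). -/
theorem stmt_3
    (f : ℝ → ℝ) (c : ℝ)
    (hdiff : Differentiable ℝ f)
    (hnonneg : ∀ x, 0 ≤ f x)
    (hint : Integrable f)
    (hone : ∫ x, f x = 1)
    (hsym : ∀ x, f (c - x) = f (c + x))
    (hup : ∀ x < c, 0 ≤ deriv f x)
    (hdown : ∀ x > c, deriv f x ≤ 0)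
    (a b r1 r2 : ℝ) (hab : a ≤ b) (hr : r1 ≤ r2) :
    ∀ s ∈ Set.Icc r1 r2,
      (∫ x in a..b,
          f (x - (if (r1 + r2) / 2 ≤ ((a + b) / 2 - c) then r1 else r2))) ≤
        ∫ x in a..b, f (x - s) := by
  have hcont : Continuous f := hdiff.continuous
  set σ : ℝ := (a + b) / 2 - c with hσ
  clear_value σ
  -- symmetry of f about c in the form f x = f (2c - x)
  have hrefl : ∀ x, f x = f (2 * c - x) := by
    intro x
    have h := hsym (x - c)
    rw [show c - (x - c) = 2 * c - x by ring, show c + (x - c) = x by ring] at h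
    exact h.symm
  -- monotone pieces
  have mono : MonotoneOn f (Set.Iic c) := by
    apply monotoneOn_of_deriv_nonneg (convex_Iic c) hcont.continuousOn
      hdiff.differentiableOn
    intro x hx
    rw [interior_Iic] at hx
    exact hup x hx
  have anti : AntitoneOn f (Set.Ici c) := by
    apply antitoneOn_of_deriv_nonpos (convex_Ici c) hcont.continuousOn
      hdiff.differentiableOn
    intro x hx
    rw [interior_Ici] at hx
    exact hdown x hx
  -- key pointwise comparison
  have key : ∀ y z : ℝ, |y - c| ≤ |z - c| → f z ≤ f y := by
    have heq : ∀ x : ℝ, f x = f (c + |x - c|) := by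
      intro x
      rcases le_total c x with h | h
      · rw [abs_of_nonneg (by linarith), show c + (x - c) = x by ring]
      · rw [abs_of_nonpos (by linarith)]
        rw [hrefl x]
        congr 1
        ring
    intro y z hyz
    rw [heq y, heq z]
    exact anti (by simp [le_add_of_nonneg_right, abs_nonneg]) (by simp [le_add_of_nonneg_right, abs_nonneg])
      (by linarith)
  -- monotonicity of H on (-∞, σ]
  have monoH : ∀ s t : ℝ, s ≤ t → t ≤ σ →
      (∫ x in a..b, f (x - s)) ≤ ∫ x in a..b, f (x - t) := by
    intro s t hst htσ
    rw [intervalIntegral.integral_comp_sub_right f s,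
      intervalIntegral.integral_comp_sub_right f t]
    have I : ∀ u v : ℝ, IntervalIntegrable f volume u v := fun u v =>
      hint.intervalIntegrable
    have h1 : (∫ x in (a - t)..(b - t), f x)
        = (∫ x in (a - t)..(a - s), f x) + ∫ x in (a - s)..(b - t), f x :=
      (intervalIntegral.integral_add_adjacent_intervals (I _ _) (I _ _)).symm
    have h2 : (∫ x in (a - s)..(b - s), f x)
        = (∫ x in (a - s)..(b - t), f x) + ∫ x in (b - t)..(b - s), f x :=
      (intervalIntegral.integral_add_adjacent_intervals (I _ _) (I _ _)).symm
    rw [h1, h2]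
    have hshift : (∫ x in (a - t)..(a - s), f x)
        = ∫ x in (b - t)..(b - s), f (x - (b - a)) := by
      rw [intervalIntegral.integral_comp_sub_right f (b - a)]
      congr 1 <;> ring
    have hmono : (∫ x in (b - t)..(b - s), f x)
        ≤ ∫ x in (b - t)..(b - s), f (x - (b - a)) := by
      apply intervalIntegral.integral_mono_on (by linarith) (I _ _)
        ((hint.comp_sub_right (b - a)).intervalIntegrable)
      intro x hx
      obtain ⟨hx1, hx2⟩ := hx
      apply key
      have hx3 : (b - a) / 2 ≤ x - c := by
        have : b - t ≥ (b - a) / 2 + c := by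
          simp only [hσ] at htσ; linarith
        linarith
      have h4 : |x - c| = x - c := abs_of_nonneg (by linarith)
      rw [h4, abs_le]
      constructor <;> linarith
    rw [hshift]
    linarith
  -- symmetry of H about σ
  have symH : ∀ u : ℝ, (∫ x in a..b, f (x - (σ + u))) = ∫ x in a..b, f (x - (σ - u)) := by
    intro u
    rw [intervalIntegral.integral_comp_sub_right f (σ + u),
      intervalIntegral.integral_comp_sub_right f (σ - u)]
    have : (∫ x in (a - (σ + u))..(b - (σ + u)), f x)
        = ∫ x in (a - (σ + u))..(b - (σ + u)), f (2 * c - x) := by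
      apply intervalIntegral.integral_congr
      intro x _
      exact hrefl x
    rw [this, intervalIntegral.integral_comp_sub_left f (2 * c)]
    congr 1 <;> (simp only [hσ]; ring)
  -- conclusion
  intro s hs
  obtain ⟨hs1, hs2⟩ := hs
  have symH' : ∀ v : ℝ, (∫ x in a..b, f (x - v)) = ∫ x in a..b, f (x - (2 * σ - v)) := by
    intro v
    have := symH (v - σ)
    rw [show σ + (v - σ) = v by ring, show σ - (v - σ) = 2 * σ - v by ring] at this
    exact this
  split_ifs with hcase
  · -- min at r1
    rcases le_total s σ with hsσ | hsσ
    · exact monoH r1 s hs1 hsσ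
    · rw [symH' s]
      exact monoH r1 (2 * σ - s) (by linarith) (by linarith)
  · -- min at r2
    push_neg at hcase
    rcases le_total σ s with hsσ | hsσ
    · rw [symH' s, symH' r2]
      exact monoH (2 * σ - r2) (2 * σ - s) (by linarith) (by linarith)
    · rw [symH' r2]
      exact monoH (2 * σ - r2) s (by linarith) (by linarith)
end

section
/- Consider the system x⁺ = F(x) + w where F : ℝⁿ → ℝⁿ is mixed monotone with decomposition function g, and w = (w₁, …, wₙ) has mutually independent components with densities f_{w_i}. Let Q₁ = [a¹, b¹] and Q₂ = [a², b²] be nonempty rectangles (a^j ≤ b^j). Then min_{x ∈ Q₁} Pr(F(x) + w ∈ Q₂) ≥ ∏_{i=1}^n min_{z_i ∈ [g_i(a¹,b¹), g_i(b¹,a¹)]} ∫_{a²_i}^{b²_i} f_{w_i}(x - z_i) dx. -/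
open MeasureTheory

/-- Lower bound on the transition probability between rectangles for a
mixed monotone system with independent additive disturbance: for every `x ∈ Q₁ = [a¹,b¹]`,
`∏ᵢ min_{zᵢ ∈ [gᵢ(a¹,b¹), gᵢ(b¹,a¹)]} ∫_{a²ᵢ}^{b²ᵢ} f_{wᵢ}(t - zᵢ) dt
  ≤ Pr(F x + w ∈ Q₂) = ∏ᵢ ∫_{a²ᵢ}^{b²ᵢ} f_{wᵢ}(t - Fᵢ(x)) dt`. -/
theorem stmt_9 {n : ℕ}
    (F : (Fin n → ℝ) → (Fin n → ℝ))
    (g : (Fin n → ℝ) → (Fin n → ℝ) → (Fin n → ℝ))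
    (hdec : ∀ x, F x = g x x)
    (hmono1 : ∀ x₁ x₂ y, x₁ ≤ x₂ → g x₁ y ≤ g x₂ y)
    (hmono2 : ∀ x y₁ y₂, y₁ ≤ y₂ → g x y₂ ≤ g x y₁)
    (f : Fin n → ℝ → ℝ)
    (hnonneg : ∀ i x, 0 ≤ f i x)
    (hint : ∀ i, Integrable (f i))
    (hone : ∀ i, ∫ x, f i x = 1)
    (a₁ b₁ a₂ b₂ : Fin n → ℝ) (h₁ : a₁ ≤ b₁) (h₂ : a₂ ≤ b₂) :
    ∀ x ∈ Set.Icc a₁ b₁,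
      (∏ i, sInf ((fun z => ∫ t in (a₂ i)..(b₂ i), f i (t - z)) ''
          Set.Icc (g a₁ b₁ i) (g b₁ a₁ i))) ≤
        ∏ i, ∫ t in (a₂ i)..(b₂ i), f i (t - F x i) := by
  intro x hx
  have hFmem : ∀ i, F x i ∈ Set.Icc (g a₁ b₁ i) (g b₁ a₁ i) := by
    intro i
    constructor
    · have h1 := hmono1 a₁ x b₁ hx.1 i
      have h2 := hmono2 x x b₁ hx.2 i
      rw [hdec]
      exact le_trans h1 h2
    · have h1 := hmono1 x b₁ x hx.2 i
      have h2 := hmono2 b₁ a₁ x hx.1 i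
      rw [hdec]
      exact le_trans h1 h2
  apply Finset.prod_le_prod
  · intro i _
    apply Real.sInf_nonneg
    rintro y ⟨z, _, rfl⟩
    exact intervalIntegral.integral_nonneg (h₂ i) (fun t _ => hnonneg i (t - z))
  · intro i _
    apply csInf_le
    · refine ⟨0, ?_⟩
      rintro y ⟨z, _, rfl⟩
      exact intervalIntegral.integral_nonneg (h₂ i) (fun t _ => hnonneg i (t - z))
    · exact ⟨F x i, hFmem i, rfl⟩
end

section
/- Under the same setting (mixed monotone F with decomposition g, independent disturbance components with densities f_{w_i}, rectangles Q₁ = [a¹, b¹] and Q₂ = [a², b²]), it holds that max_{x ∈ Q₁} Pr(F(x) + w ∈ Q₂) ≤ ∏_{i=1}^n max_{z_i ∈ [g_i(a¹,b¹), g_i(b¹,a¹)]} ∫_{a²_i}^{b²_i} f_{w_i}(x - z_i) dx. -/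
open MeasureTheory

/-- Upper bound on the transition probability between rectangles for a
mixed monotone system with independent additive disturbance: for every `x ∈ Q₁ = [a¹,b¹]`,
`Pr(F x + w ∈ Q₂) = ∏ᵢ ∫_{a²ᵢ}^{b²ᵢ} f_{wᵢ}(t - Fᵢ(x)) dt
  ≤ ∏ᵢ max_{zᵢ ∈ [gᵢ(a¹,b¹), gᵢ(b¹,a¹)]} ∫_{a²ᵢ}^{b²ᵢ} f_{wᵢ}(t - zᵢ) dt`. -/
theorem stmt_10 {n : ℕ}
    (F : (Fin n → ℝ) → (Fin n → ℝ))
    (g : (Fin n → ℝ) → (Fin n → ℝ) → (Fin n → ℝ))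
    (hdec : ∀ x, F x = g x x)
    (hmono1 : ∀ x₁ x₂ y, x₁ ≤ x₂ → g x₁ y ≤ g x₂ y)
    (hmono2 : ∀ x y₁ y₂, y₁ ≤ y₂ → g x y₂ ≤ g x y₁)
    (f : Fin n → ℝ → ℝ)
    (hnonneg : ∀ i x, 0 ≤ f i x)
    (hint : ∀ i, Integrable (f i))
    (hone : ∀ i, ∫ x, f i x = 1)
    (a₁ b₁ a₂ b₂ : Fin n → ℝ) (h₁ : a₁ ≤ b₁) (h₂ : a₂ ≤ b₂) :
    ∀ x ∈ Set.Icc a₁ b₁,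
      (∏ i, ∫ t in (a₂ i)..(b₂ i), f i (t - F x i)) ≤
        ∏ i, sSup ((fun z => ∫ t in (a₂ i)..(b₂ i), f i (t - z)) ''
          Set.Icc (g a₁ b₁ i) (g b₁ a₁ i)) := by
  intro x hx
  apply Finset.prod_le_prod
  · intro i _
    exact intervalIntegral.integral_nonneg (h₂ i) (fun t _ => hnonneg i _)
  · intro i _
    have hbdd : BddAbove ((fun z => ∫ t in (a₂ i)..(b₂ i), f i (t - z)) ''
        Set.Icc (g a₁ b₁ i) (g b₁ a₁ i)) := by
      refine ⟨1, ?_⟩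
      rintro _ ⟨z, _, rfl⟩
      have hint' : Integrable (fun t => f i (t - z)) := (hint i).comp_sub_right z
      calc (∫ t in (a₂ i)..(b₂ i), f i (t - z))
          = ∫ t in Set.Ioc (a₂ i) (b₂ i), f i (t - z) := intervalIntegral.integral_of_le (h₂ i)
        _ ≤ ∫ t, f i (t - z) := setIntegral_le_integral hint'
            (Filter.Eventually.of_forall fun t => hnonneg i _)
        _ = ∫ t, f i t := by
            simpa using MeasureTheory.integral_sub_right_eq_self (f i) z
        _ = 1 := hone i
    apply le_csSup hbdd
    refine ⟨F x i, ?_, rfl⟩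
    constructor
    · have : g a₁ b₁ ≤ g x b₁ := hmono1 _ _ _ hx.1
      have h2 : g x b₁ ≤ g x x := hmono2 _ _ _ hx.2
      rw [hdec]
      exact le_trans (this i) (h2 i)
    · have : g x a₁ ≤ g b₁ a₁ := hmono1 _ _ _ hx.2
      have h2 : g x x ≤ g x a₁ := hmono2 _ _ _ hx.1
      rw [hdec]
      exact le_trans (h2 i) (this i)
end

section
/- In a finite Markov chain, almost every infinite trajectory eventually enters a bottom strongly connected component: for any infinite sequence of states q₀q₁q₂… generated with positive probability transitions, there exists an index i ≥ 0 such that q_i belongs to a BSCC (the set of trajectories that never enter a BSCC has probability zero). -/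
open MeasureTheory

/-- A set `B` of states is a bottom strongly connected component of the finite Markov
chain with transition matrix `T`: strongly connected (via positive-probability
transitions within `B`), maximal among strongly connected sets, and closed. -/
def IsBSCC {Q : Type*} [Fintype Q] (T : Q → Q → ℝ) (B : Finset Q) : Prop :=
  (∀ q ∈ B, ∀ t ∈ B,
    Relation.ReflTransGen (fun u v => u ∈ B ∧ v ∈ B ∧ 0 < T u v) q t) ∧
  (∀ B' : Finset Q, B ⊆ B' →
    (∀ q ∈ B', ∀ t ∈ B',
      Relation.ReflTransGen (fun u v => u ∈ B' ∧ v ∈ B' ∧ 0 < T u v) q t) → B' = B) ∧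
  (∀ s ∈ B, ∑ t ∈ B, T s t = 1)

/-!
Let `A` be the set of states lying in no BSCC. From every state some BSCC is reachable (follow
positive-probability steps to a state whose reachable set is minimal; that set is a BSCC), so
from every state the chain leaves `A` within a bounded number `N` of steps with probability at
least some `ε > 0`. By the Markov property the probability of staying in `A` for `k N` steps is at
most `(1 - ε) ^ k`, hence the trajectories that stay in `A` forever form a null set.
-/

open Filter Topology Finset

section Reachability

variable {α : Type*}

theorem Relation.ReflTransGen.restrict_of_closed {r : α → α → Prop} {B : Finset α}
    (hB : ∀ a b, a ∈ B → r a b → b ∈ B) {a b : α} (h : Relation.ReflTransGen r a b)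
    (ha : a ∈ B) : Relation.ReflTransGen (fun u v => u ∈ B ∧ v ∈ B ∧ r u v) a b := by
  induction h using Relation.ReflTransGen.head_induction_on with
  | refl => exact .refl
  | head hac _ ih =>
    have hc := hB _ _ ha hac
    exact .head ⟨ha, hc, hac⟩ (ih hc)

/-- Choose `t` reachable from `q` with the fewest reachable states: anything reachable from `t`
reaches no more states than `t`, hence exactly the same ones, `t` among them. -/
theorem Relation.exists_reflTransGen_forall_reflTransGen_imp [Fintype α] (r : α → α → Prop)
    (q : α) :
    ∃ t, Relation.ReflTransGen r q t ∧
      ∀ s, Relation.ReflTransGen r t s → Relation.ReflTransGen r s t := by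
  classical
  obtain ⟨t, hqt, hmin⟩ := (univ.filter (Relation.ReflTransGen r q)).exists_min_image
    (fun t => #(univ.filter (Relation.ReflTransGen r t))) ⟨q, by simpa using .refl⟩
  simp only [mem_filter, mem_univ, true_and] at hqt hmin
  refine ⟨t, hqt, fun s hts => ?_⟩
  have hsub : univ.filter (Relation.ReflTransGen r s) ⊆
      univ.filter (Relation.ReflTransGen r t) := by
    intro x
    simpa using hts.trans
  have hreach_eq := eq_of_subset_of_card_le hsub (hmin s (hqt.trans hts))
  have ht : t ∈ univ.filter (Relation.ReflTransGen r t) := by simpa using .refl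
  simpa [← hreach_eq] using ht

end Reachability

section BSCC

variable {Q : Type*} [Fintype Q] {T : Q → Q → ℝ}

theorem exists_isBSCC_reflTransGen (hT0 : ∀ q t, 0 ≤ T q t) (hT1 : ∀ q, ∑ t, T q t = 1)
    (q : Q) : ∃ B, IsBSCC T B ∧ ∃ t ∈ B, Relation.ReflTransGen (fun u v => 0 < T u v) q t := by
  classical
  set R : Q → Q → Prop := fun u v => 0 < T u v
  obtain ⟨t, hqt, hback⟩ := Relation.exists_reflTransGen_forall_reflTransGen_imp R q
  set B := univ.filter (Relation.ReflTransGen R t)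
  have hmem : ∀ x, x ∈ B ↔ Relation.ReflTransGen R t x := by simp [B]
  have hclosed : ∀ a b, a ∈ B → R a b → b ∈ B := fun a b ha hab =>
    (hmem b).2 (((hmem a).1 ha).tail hab)
  refine ⟨B, ⟨fun a ha b hb => ?_, fun B' hBB' hB' => ?_, fun s hs => ?_⟩,
    t, (hmem t).2 .refl, hqt⟩
  · exact ((hback a ((hmem a).1 ha)).trans ((hmem b).1 hb)).restrict_of_closed hclosed ha
  · refine Subset.antisymm (fun x hx => (hmem x).2 ?_) hBB'
    exact Relation.ReflTransGen.mono (fun _ _ h => h.2.2) _ _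
      (hB' t (hBB' ((hmem t).2 .refl)) x hx)
  · rw [← hT1 s, sum_subset (subset_univ B)]
    intro u _ hu
    by_contra hne
    exact hu (hclosed s u hs ((hT0 s u).lt_of_ne' hne))

end BSCC

section StayProbability

variable {Q : Type*} [Fintype Q] [DecidableEq Q] (T : Q → Q → ℝ) (A : Finset Q)

/-- Probability that the chain started at `q` spends its first `m + 1` states in `A`. -/
noncomputable def stayProb : ℕ → Q → ℝ
  | 0, q => if q ∈ A then 1 else 0
  | m + 1, q => if q ∈ A then ∑ t, T q t * stayProb m t else 0

variable {T A}

theorem stayProb_of_notMem {q : Q} (hq : q ∉ A) (m : ℕ) : stayProb T A m q = 0 := by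
  cases m <;> simp [stayProb, hq]

theorem stayProb_nonneg (hT0 : ∀ q t, 0 ≤ T q t) (m : ℕ) (q : Q) : 0 ≤ stayProb T A m q := by
  induction m generalizing q with
  | zero => unfold stayProb; split <;> norm_num
  | succ m ih =>
    unfold stayProb
    split
    · exact sum_nonneg fun t _ => mul_nonneg (hT0 q t) (ih t)
    · exact le_rfl

theorem stayProb_le_one (hT0 : ∀ q t, 0 ≤ T q t) (hT1 : ∀ q, ∑ t, T q t = 1) (m : ℕ) (q : Q) :
    stayProb T A m q ≤ 1 := by
  induction m generalizing q with
  | zero => unfold stayProb; split <;> norm_num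
  | succ m ih =>
    unfold stayProb
    split
    · calc ∑ t, T q t * stayProb T A m t ≤ ∑ t, T q t :=
            sum_le_sum fun t _ => mul_le_of_le_one_right (hT0 q t) (ih t)
        _ = 1 := hT1 q
    · exact zero_le_one

theorem stayProb_succ_le (hT0 : ∀ q t, 0 ≤ T q t) (hT1 : ∀ q, ∑ t, T q t = 1) (m : ℕ) (q : Q) :
    stayProb T A (m + 1) q ≤ stayProb T A m q := by
  induction m generalizing q with
  | zero =>
    by_cases hq : q ∈ A
    · rw [show stayProb T A 0 q = 1 by simp [stayProb, hq]]
      exact stayProb_le_one hT0 hT1 1 q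
    · simp [stayProb_of_notMem hq]
  | succ m ih =>
    unfold stayProb
    split
    · exact sum_le_sum fun t _ => mul_le_mul_of_nonneg_left (ih t) (hT0 q t)
    · exact le_rfl

theorem stayProb_antitone (hT0 : ∀ q t, 0 ≤ T q t) (hT1 : ∀ q, ∑ t, T q t = 1) (q : Q) :
    Antitone fun m => stayProb T A m q :=
  antitone_nat_of_succ_le fun m => stayProb_succ_le hT0 hT1 m q

theorem exists_stayProb_lt_one (hT0 : ∀ q t, 0 ≤ T q t) (hT1 : ∀ q, ∑ t, T q t = 1) {q t : Q}
    (hqt : Relation.ReflTransGen (fun u v => 0 < T u v) q t) (ht : t ∉ A) :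
    ∃ L, stayProb T A L q < 1 := by
  induction hqt using Relation.ReflTransGen.head_induction_on with
  | refl => exact ⟨0, by simp [stayProb, ht]⟩
  | @head a b hab _ ih =>
    obtain ⟨L, hL⟩ := ih
    refine ⟨L + 1, ?_⟩
    by_cases ha : a ∈ A
    swap
    · simp [stayProb, ha]
    simp only [stayProb, if_pos ha]
    calc ∑ u, T a u * stayProb T A L u < ∑ u, T a u :=
          sum_lt_sum (fun u _ => mul_le_of_le_one_right (hT0 a u) (stayProb_le_one hT0 hT1 L u))
            ⟨b, mem_univ b, mul_lt_of_lt_one_right hab hL⟩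
      _ = 1 := hT1 a

theorem stayProb_add_le (hT0 : ∀ q t, 0 ≤ T q t) {C : ℝ} {b : ℕ}
    (hC : ∀ t, stayProb T A b t ≤ C) (a : ℕ) (q : Q) :
    stayProb T A (a + b) q ≤ C * stayProb T A a q := by
  induction a generalizing q with
  | zero =>
    by_cases hq : q ∈ A
    · simpa [stayProb, hq] using hC q
    · simp [stayProb_of_notMem hq]
  | succ a ih =>
    rw [show a + 1 + b = a + b + 1 by omega]
    unfold stayProb
    split
    · rw [mul_sum]
      exact sum_le_sum fun u _ => by nlinarith [ih u, hT0 q u]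
    · simp

theorem stayProb_mul_le_pow (hT0 : ∀ q t, 0 ≤ T q t) {C : ℝ} {N : ℕ} (hC0 : 0 ≤ C)
    (hC : ∀ t, stayProb T A N t ≤ C) (k : ℕ) (q : Q) : stayProb T A (k * N) q ≤ C ^ k := by
  induction k generalizing q with
  | zero =>
    rw [zero_mul, pow_zero]
    unfold stayProb
    split <;> norm_num
  | succ k ih =>
    calc stayProb T A ((k + 1) * N) q = stayProb T A (k * N + N) q := by rw [add_mul, one_mul]
      _ ≤ C * stayProb T A (k * N) q := stayProb_add_le hT0 hC _ q
      _ ≤ C * C ^ k := mul_le_mul_of_nonneg_left (ih q) hC0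
      _ = C ^ (k + 1) := (pow_succ' C k).symm

theorem tendsto_stayProb_atTop_zero (hT0 : ∀ q t, 0 ≤ T q t) (hT1 : ∀ q, ∑ t, T q t = 1)
    (hA : ∀ q, ∃ t ∉ A, Relation.ReflTransGen (fun u v => 0 < T u v) q t) (q : Q) :
    Tendsto (fun m => stayProb T A m q) atTop (𝓝 0) := by
  have hlt : ∀ s, ∃ L, stayProb T A L s < 1 := fun s =>
    let ⟨_, ht, hst⟩ := hA s
    exists_stayProb_lt_one hT0 hT1 hst ht
  choose L hL using hlt
  set N := univ.sup L + 1
  set C := univ.sup' ⟨q, mem_univ q⟩ (stayProb T A N)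
  have hC : ∀ t, stayProb T A N t ≤ C := fun t => le_sup' _ (mem_univ t)
  have hC0 : 0 ≤ C := (stayProb_nonneg hT0 N q).trans (hC q)
  have hC1 : C < 1 := (sup'_lt_iff _).2 fun t _ =>
    (stayProb_antitone hT0 hT1 t ((le_sup (mem_univ t)).trans (univ.sup L).le_succ)).trans_lt
      (hL t)
  refine squeeze_zero (fun m => stayProb_nonneg hT0 m q) (fun m => ?_)
    ((tendsto_pow_atTop_nhds_zero_of_lt_one hC0 hC1).comp
      (Nat.tendsto_div_const_atTop (univ.sup L).succ_ne_zero))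
  calc stayProb T A m q ≤ stayProb T A (m / N * N) q :=
        stayProb_antitone hT0 hT1 q (Nat.div_mul_le_self m N)
    _ ≤ C ^ (m / N) := stayProb_mul_le_pow hT0 hC0 hC _ q

end StayProbability

section Trajectories

variable {Q : Type*} {A : Finset Q}

theorem cylinder_inter_staysIn_eq_empty {m n : ℕ} {w : ℕ → Q} (hwn : w n ∉ A) :
    {ω : ℕ → Q | ∀ i ≤ n, ω i = w i} ∩ {ω | ∀ i, n ≤ i → i ≤ n + m → ω i ∈ A} = ∅ :=
  Set.eq_empty_of_forall_notMem fun ω hω => hwn (hω.1 n le_rfl ▸ hω.2 n le_rfl (by omega))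

variable [MeasurableSpace Q] {T : Q → Q → ℝ} {μ : Measure (ℕ → Q)}

def HasCylinderTransitions (μ : Measure (ℕ → Q)) (T : Q → Q → ℝ) : Prop :=
  ∀ (m : ℕ) (w : ℕ → Q), μ {ω | ∀ i ≤ m + 1, ω i = w i} =
    μ {ω | ∀ i ≤ m, ω i = w i} * ENNReal.ofReal (T (w m) (w (m + 1)))

variable [Fintype Q] [DecidableEq Q]

theorem measure_cylinder_inter_staysIn_le (hT0 : ∀ q t, 0 ≤ T q t)
    (hMarkov : HasCylinderTransitions μ T)
    (m n : ℕ) (w : ℕ → Q) :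
    μ ({ω | ∀ i ≤ n, ω i = w i} ∩ {ω | ∀ i, n ≤ i → i ≤ n + m → ω i ∈ A}) ≤
      μ {ω | ∀ i ≤ n, ω i = w i} * ENNReal.ofReal (stayProb T A m (w n)) := by
  by_cases hwn : w n ∈ A
  swap
  · simp [cylinder_inter_staysIn_eq_empty hwn]
  induction m generalizing n w with
  | zero =>
    rw [show stayProb T A 0 (w n) = 1 by simp [stayProb, hwn], ENNReal.ofReal_one, mul_one]
    exact measure_mono Set.inter_subset_left
  | succ m ih =>
    have hcyl : ∀ t, {ω : ℕ → Q | ∀ i ≤ n, ω i = Function.update w (n + 1) t i} =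
        {ω | ∀ i ≤ n, ω i = w i} :=
      fun t => Set.ext fun ω => forall₂_congr fun i hi => by
        rw [Function.update_of_ne (by omega)]
    have hcover : {ω : ℕ → Q | ∀ i ≤ n, ω i = w i} ∩
        {ω | ∀ i, n ≤ i → i ≤ n + (m + 1) → ω i ∈ A} ⊆
        ⋃ t, {ω | ∀ i ≤ n + 1, ω i = Function.update w (n + 1) t i} ∩
          {ω | ∀ i, n + 1 ≤ i → i ≤ n + 1 + m → ω i ∈ A} := by
      intro ω ⟨hω, hstay⟩
      refine Set.mem_iUnion.2 ⟨ω (n + 1), fun i hi => ?_,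
        fun i h1 h2 => hstay i (by omega) (by omega)⟩
      rcases hi.lt_or_eq with hi | rfl
      · rw [Function.update_of_ne (by omega)]
        exact hω i (by omega)
      · simp
    calc _ ≤ ∑ t, μ ({ω | ∀ i ≤ n + 1, ω i = Function.update w (n + 1) t i} ∩
            {ω | ∀ i, n + 1 ≤ i → i ≤ n + 1 + m → ω i ∈ A}) :=
          (measure_mono hcover).trans (measure_iUnion_fintype_le _ _)
      _ ≤ ∑ t, μ {ω | ∀ i ≤ n + 1, ω i = Function.update w (n + 1) t i} *
            ENNReal.ofReal (stayProb T A m t) := by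
          refine sum_le_sum fun t _ => ?_
          by_cases ht : t ∈ A
          · simpa using ih (n + 1) (Function.update w (n + 1) t) (by simpa using ht)
          · rw [cylinder_inter_staysIn_eq_empty (show Function.update w (n + 1) t (n + 1) ∉ A
              by simpa using ht), measure_empty]
            exact zero_le
      _ = ∑ t, μ {ω | ∀ i ≤ n, ω i = w i} *
            (ENNReal.ofReal (T (w n) t) * ENNReal.ofReal (stayProb T A m t)) := by
          refine sum_congr rfl fun t _ => ?_
          rw [hMarkov, hcyl, mul_assoc]
          simp
      _ = _ := by
          rw [← mul_sum, stayProb, if_pos hwn, ENNReal.ofReal_sum_of_nonneg fun t _ =>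
            mul_nonneg (hT0 _ _) (stayProb_nonneg hT0 m t)]
          simp only [ENNReal.ofReal_mul (hT0 _ _)]

theorem measure_forall_mem_le [IsProbabilityMeasure μ] (hT0 : ∀ q t, 0 ≤ T q t)
    (hMarkov : HasCylinderTransitions μ T)
    (m : ℕ) : μ {ω | ∀ i, ω i ∈ A} ≤ ENNReal.ofReal (∑ q, stayProb T A m q) := by
  have hcover : {ω : ℕ → Q | ∀ i, ω i ∈ A} ⊆
      ⋃ q, {ω | ∀ i ≤ 0, ω i = (fun _ => q) i} ∩ {ω | ∀ i, 0 ≤ i → i ≤ 0 + m → ω i ∈ A} :=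
    fun ω hω => Set.mem_iUnion.2 ⟨ω 0, fun i hi => by rw [Nat.le_zero.1 hi], fun i _ _ => hω i⟩
  calc _ ≤ ∑ q, μ ({ω | ∀ i ≤ 0, ω i = (fun _ => q) i} ∩
          {ω | ∀ i, 0 ≤ i → i ≤ 0 + m → ω i ∈ A}) :=
        (measure_mono hcover).trans (measure_iUnion_fintype_le _ _)
    _ ≤ ∑ q, 1 * ENNReal.ofReal (stayProb T A m q) := sum_le_sum fun q _ =>
        (measure_cylinder_inter_staysIn_le hT0 hMarkov m 0 _).trans
          (mul_le_mul_left prob_le_one _)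
    _ = _ := by
        rw [ENNReal.ofReal_sum_of_nonneg fun q _ => stayProb_nonneg hT0 m q]
        simp only [one_mul]

theorem measure_forall_mem_eq_zero [IsProbabilityMeasure μ] (hT0 : ∀ q t, 0 ≤ T q t)
    (hT1 : ∀ q, ∑ t, T q t = 1)
    (hMarkov : HasCylinderTransitions μ T)
    (hA : ∀ q, ∃ t ∉ A, Relation.ReflTransGen (fun u v => 0 < T u v) q t) :
    μ {ω | ∀ i, ω i ∈ A} = 0 := by
  have hsum : Tendsto (fun m => ∑ q, stayProb T A m q) atTop (𝓝 0) := by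
    simpa using tendsto_finsetSum univ fun q _ => tendsto_stayProb_atTop_zero hT0 hT1 hA q
  have hlim := ENNReal.tendsto_ofReal hsum
  rw [ENNReal.ofReal_zero] at hlim
  exact le_antisymm (ge_of_tendsto' hlim (measure_forall_mem_le hT0 hMarkov)) zero_le

end Trajectories

theorem stmt_13_general {Q : Type*} [Fintype Q] [MeasurableSpace Q]
    (T : Q → Q → ℝ)
    (hT0 : ∀ q t, 0 ≤ T q t) (hT1 : ∀ q, ∑ t, T q t = 1)
    (μ : Measure (ℕ → Q)) [IsProbabilityMeasure μ]
    (hMarkov : ∀ (m : ℕ) (w : ℕ → Q),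
      μ {ω | ∀ i ≤ m + 1, ω i = w i} =
        μ {ω | ∀ i ≤ m, ω i = w i} * ENNReal.ofReal (T (w m) (w (m + 1)))) :
    μ {ω | ∀ i : ℕ, ∀ B : Finset Q, IsBSCC T B → ω i ∉ B} = 0 := by
  classical
  set A := univ.filter fun q => ∀ B, IsBSCC T B → q ∉ B
  have hA : ∀ q, ∃ t ∉ A, Relation.ReflTransGen (fun u v => 0 < T u v) q t := fun q =>
    let ⟨B, hB, t, htB, hqt⟩ := exists_isBSCC_reflTransGen hT0 hT1 q
    ⟨t, by simpa [A] using ⟨B, hB, htB⟩, hqt⟩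
  have hnever : {ω : ℕ → Q | ∀ i, ∀ B, IsBSCC T B → ω i ∉ B} = {ω | ∀ i, ω i ∈ A} := by
    ext
    simp [A]
  rw [hnever]
  exact measure_forall_mem_eq_zero hT0 hT1 hMarkov hA

/-- In a finite Markov chain, almost every infinite trajectory
eventually enters a BSCC: the set of trajectories that never visit a state belonging
to some BSCC has probability zero. -/
theorem stmt_13 {Q : Type*} [Fintype Q] [MeasurableSpace Q] [MeasurableSingletonClass Q]
    (T : Q → Q → ℝ)
    (hT0 : ∀ q t, 0 ≤ T q t) (hT1 : ∀ q, ∑ t, T q t = 1)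
    (μ : Measure (ℕ → Q)) [IsProbabilityMeasure μ]
    (hMarkov : ∀ (m : ℕ) (w : ℕ → Q),
      μ {ω | ∀ i ≤ m + 1, ω i = w i} =
        μ {ω | ∀ i ≤ m, ω i = w i} * ENNReal.ofReal (T (w m) (w (m + 1)))) :
    μ {ω | ∀ i : ℕ, ∀ B : Finset Q, IsBSCC T B → ω i ∉ B} = 0 :=
  stmt_13_general T hT0 hT1 μ hMarkov
end

section
/- Let f : ℝ → ℝ be a symmetric, unimodal probability density with mode c, and a ≤ b, and set H(s) = ∫_a^b f(x - s) dx and s_max = (a+b)/2 - c. Then for r1 ≤ r2, max_{s ∈ [r1,r2]} H(s) − min_{s ∈ [r1,r2]} H(s) = H(proj_{[r1,r2]}(s_max)) − H(argmax_{s ∈ {r1,r2}} |s_max − s|), i.e., the extrema of H over [r1, r2] occur at the projection of s_max onto [r1, r2] and at the endpoint of [r1, r2] farthest from s_max, respectively. -/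
open MeasureTheory

/-- Pointwise comparison for a symmetric unimodal function: farther from the
mode means smaller value. -/
private lemma stmt17_pair {f : ℝ → ℝ} {c : ℝ}
    (hdiff : Differentiable ℝ f)
    (hsym : ∀ x, f (c - x) = f (c + x))
    (hup : ∀ x < c, 0 ≤ deriv f x)
    (hdown : ∀ x > c, deriv f x ≤ 0) :
    ∀ y z : ℝ, |y - c| ≤ |z - c| → f z ≤ f y := by
  have hrefl : ∀ x, f (2 * c - x) = f x := by
    intro x
    have h := hsym (x - c)
    have h1 : c - (x - c) = 2 * c - x := by ring
    have h2 : c + (x - c) = x := by ring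
    rwa [h1, h2] at h
  have hmono : MonotoneOn f (Set.Iic c) := by
    apply monotoneOn_of_deriv_nonneg (convex_Iic c) hdiff.continuous.continuousOn
      hdiff.differentiableOn
    intro x hx
    rw [interior_Iic] at hx
    exact hup x hx
  have hanti : AntitoneOn f (Set.Ici c) := by
    apply antitoneOn_of_deriv_nonpos (convex_Ici c) hdiff.continuous.continuousOn
      hdiff.differentiableOn
    intro x hx
    rw [interior_Ici] at hx
    exact hdown x hx
  -- first, for y z ≥ c
  have key : ∀ y z : ℝ, c ≤ y → c ≤ z → y - c ≤ z - c → f z ≤ f y := by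
    intro y z hy hz h
    exact hanti (Set.mem_Ici.2 hy) (Set.mem_Ici.2 hz) (by linarith)
  intro y z h
  set y' := if c ≤ y then y else 2 * c - y with hy'
  set z' := if c ≤ z then z else 2 * c - z with hz'
  have hfy : f y' = f y := by
    by_cases h1 : c ≤ y
    · simp [hy', h1]
    · simp [hy', h1, hrefl]
  have hfz : f z' = f z := by
    by_cases h1 : c ≤ z
    · simp [hz', h1]
    · simp [hz', h1, hrefl]
  have hy1 : c ≤ y' := by
    by_cases h1 : c ≤ y <;> simp [hy', h1] <;> linarith [not_le.1 h1]
  have hz1 : c ≤ z' := by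
    by_cases h1 : c ≤ z <;> simp [hz', h1] <;> linarith [not_le.1 h1]
  have hy2 : y' - c = |y - c| := by
    by_cases h1 : c ≤ y
    · simp [hy', h1, abs_of_nonneg (by linarith : (0:ℝ) ≤ y - c)]
    · rw [hy', if_neg h1, abs_of_neg (by linarith [not_le.1 h1] : y - c < 0)]; ring
  have hz2 : z' - c = |z - c| := by
    by_cases h1 : c ≤ z
    · simp [hz', h1, abs_of_nonneg (by linarith : (0:ℝ) ≤ z - c)]
    · rw [hz', if_neg h1, abs_of_neg (by linarith [not_le.1 h1] : z - c < 0)]; ring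
  rw [← hfy, ← hfz]
  exact key y' z' hy1 hz1 (by rw [hy2, hz2]; exact h)

/-- For a symmetric unimodal density `f` with mode `c` and
`H s = ∫ x in a..b, f (x - s)`, the extrema of `H` over `[r1, r2]` occur at the
projection of `s_max = (a+b)/2 - c` onto `[r1, r2]` (maximum) and at the endpoint of
`[r1, r2]` farthest from `s_max` (minimum):
`sSup (H '' [r1,r2]) - sInf (H '' [r1,r2]) = H proj - H far`. -/
theorem stmt_17
    (f : ℝ → ℝ) (c : ℝ)
    (hdiff : Differentiable ℝ f)
    (hnonneg : ∀ x, 0 ≤ f x)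
    (hint : Integrable f)
    (hone : ∫ x, f x = 1)
    (hsym : ∀ x, f (c - x) = f (c + x))
    (hup : ∀ x < c, 0 ≤ deriv f x)
    (hdown : ∀ x > c, deriv f x ≤ 0)
    (a b r1 r2 : ℝ) (hab : a ≤ b) (hr : r1 ≤ r2) :
    sSup ((fun s => ∫ x in a..b, f (x - s)) '' Set.Icc r1 r2) -
        sInf ((fun s => ∫ x in a..b, f (x - s)) '' Set.Icc r1 r2) =
      (∫ x in a..b,
          f (x - (if ((a + b) / 2 - c) < r1 then r1
            else if r2 < ((a + b) / 2 - c) then r2 else ((a + b) / 2 - c)))) -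
        ∫ x in a..b,
          f (x - (if (r1 + r2) / 2 ≤ ((a + b) / 2 - c) then r1 else r2)) := by
  have hpair := stmt17_pair hdiff hsym hup hdown
  set H : ℝ → ℝ := fun s => ∫ x in a..b, f (x - s) with hH
  set m : ℝ := (a + b) / 2 - c with hm
  set L : ℝ := b - a with hL
  have hL0 : 0 ≤ L := by simp [hL]; linarith
  have hii : ∀ p q : ℝ, IntervalIntegrable f volume p q := fun p q =>
    hint.intervalIntegrable
  have hiiL : ∀ p q : ℝ, IntervalIntegrable (fun x => f (x + L)) volume p q := by
    intro p q
    have := (hii (p + L) (q + L)).comp_add_right L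
    simpa using this
  -- H as a shifted integral
  have hHshift : ∀ s : ℝ, H s = ∫ x in (a - s)..(b - s), f x := fun s =>
    intervalIntegral.integral_comp_sub_right f s
  -- monotone on the left of m
  have hmono : ∀ s t : ℝ, s ≤ t → t ≤ m → H s ≤ H t := by
    intro s t hst htm
    rw [hHshift, hHshift]
    have c1 : (∫ x in (a - t)..(b - t), f x) =
        (∫ x in (a - t)..(a - s), f x) + ∫ x in (a - s)..(b - t), f x :=
      (intervalIntegral.integral_add_adjacent_intervals (hii _ _) (hii _ _)).symm
    have c2 : (∫ x in (a - s)..(b - s), f x) =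
        (∫ x in (a - s)..(b - t), f x) + ∫ x in (b - t)..(b - s), f x :=
      (intervalIntegral.integral_add_adjacent_intervals (hii _ _) (hii _ _)).symm
    have c3 : (∫ x in (b - t)..(b - s), f x) =
        ∫ x in (a - t)..(a - s), f (x + L) := by
      rw [intervalIntegral.integral_comp_add_right (fun x => f x) L]
      congr 1 <;> simp [hL] <;> ring
    have c4 : (∫ x in (a - t)..(a - s), f (x + L)) ≤
        ∫ x in (a - t)..(a - s), f x := by
      apply intervalIntegral.integral_mono_on (by linarith) (hiiL _ _) (hii _ _)
      intro x hx
      apply hpair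
      have hx1 : a - t ≤ x := hx.1
      have hm' : a - t ≥ c - L / 2 := by simp only [hm, hL] at *; linarith
      rw [abs_of_nonneg (by linarith : (0:ℝ) ≤ x + L - c)]
      rw [abs_le]
      constructor <;> linarith
    linarith
  -- symmetry of H about m
  have hsymH : ∀ s : ℝ, H (2 * m - s) = H s := by
    intro s
    rw [hHshift, hHshift]
    have hr1 : (∫ x in (a - s)..(b - s), f x) =
        ∫ x in (a - s)..(b - s), f (2 * c - x) := by
      apply intervalIntegral.integral_congr
      intro x _
      have h := hsym (x - c)
      have h1 : c - (x - c) = 2 * c - x := by ring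
      have h2 : c + (x - c) = x := by ring
      rw [h1, h2] at h
      exact h.symm
    rw [hr1, intervalIntegral.integral_comp_sub_left f (2 * c)]
    congr 1 <;> (simp only [hm]; ring)
  -- antitone on the right of m
  have hanti : ∀ s t : ℝ, m ≤ s → s ≤ t → H t ≤ H s := by
    intro s t hms hst
    have h1 : H t = H (2 * m - t) := (hsymH t).symm
    have h2 : H s = H (2 * m - s) := (hsymH s).symm
    rw [h1, h2]
    exact hmono _ _ (by linarith) (by linarith)
  set proj : ℝ := if m < r1 then r1 else if r2 < m then r2 else m with hproj
  set far : ℝ := if (r1 + r2) / 2 ≤ m then r1 else r2 with hfar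
  have hprojmem : proj ∈ Set.Icc r1 r2 := by
    rw [hproj]
    split_ifs with h1 h2
    · exact ⟨le_refl _, hr⟩
    · exact ⟨hr, le_refl _⟩
    · exact ⟨not_lt.1 h1, not_lt.1 h2⟩
  have hfarmem : far ∈ Set.Icc r1 r2 := by
    rw [hfar]; split_ifs
    · exact ⟨le_refl _, hr⟩
    · exact ⟨hr, le_refl _⟩
  have hub : ∀ s ∈ Set.Icc r1 r2, H s ≤ H proj := by
    intro s hs
    rw [hproj]
    split_ifs with h1 h2
    · exact hanti r1 s (le_of_lt h1) hs.1
    · exact hmono s r2 hs.2 (le_of_lt h2)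
    · rcases le_or_gt s m with h | h
      · exact hmono s m h (le_refl _)
      · exact hanti m s (le_refl _) (le_of_lt h)
  have hlb : ∀ s ∈ Set.Icc r1 r2, H far ≤ H s := by
    intro s hs
    obtain ⟨hs1, hs2⟩ := Set.mem_Icc.mp hs
    clear_value m
    rw [hfar]
    split_ifs with h1
    · -- far = r1, (r1+r2)/2 ≤ m
      rcases le_or_gt s m with h | h
      · exact hmono r1 s hs.1 h
      · rw [← hsymH s]
        exact hmono r1 (2 * m - s) (by linarith) (by linarith)
    · -- far = r2, m < (r1+r2)/2
      push_neg at h1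
      rcases le_or_gt m s with h | h
      · exact hanti s r2 h hs.2
      · rw [← hsymH s]
        exact hanti (2 * m - s) r2 (by linarith) (by linarith)
  have hmax : IsGreatest (H '' Set.Icc r1 r2) (H proj) :=
    ⟨Set.mem_image_of_mem H hprojmem, by rintro y ⟨s, hs, rfl⟩; exact hub s hs⟩
  have hmin : IsLeast (H '' Set.Icc r1 r2) (H far) :=
    ⟨Set.mem_image_of_mem H hfarmem, by rintro y ⟨s, hs, rfl⟩; exact hlb s hs⟩
  rw [hmax.csSup_eq, hmin.csInf_eq]
end

section
/- Consider the transition probability bounds of Theorem 1: for rectangles Q_j = [a^j, b^j], Q_ℓ = [a^ℓ, b^ℓ] and the system x⁺ = F(x) + w with F mixed monotone with decomposition g and w having independent, symmetric, unimodal component densities f_{w_i} with modes c_i, define Ť(Q_j, Q_ℓ) = ∏_i ∫_{a^ℓ_i}^{b^ℓ_i} f_{w_i}(x − s^{j→ℓ}_{i,min}) dx and T̂(Q_j, Q_ℓ) = ∏_i ∫_{a^ℓ_i}^{b^ℓ_i} f_{w_i}(x − s^{j→ℓ}_{i,max}) dx, where s^{j→ℓ}_{i,max} is the projection of s^ℓ_{i,max}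 = (a^ℓ_i + b^ℓ_i)/2 − c_i onto [g_i(a^j,b^j), g_i(b^j,a^j)] and s^{j→ℓ}_{i,min} is the endpoint of that interval farthest from s^ℓ_{i,max}. Then Ť(Q_j,Q_ℓ) ≤ inf_{x∈Q_j} Pr(F(x)+w ∈ Q_ℓ) and sup_{x∈Q_j} Pr(F(x)+w ∈ Q_ℓ) ≤ T̂(Q_j,Q_ℓ). -/
/-! In coordinate `i` the transition probability is the mass `h(s) = ∫_{a}^{b} f(t - s) dt` of the
window `[a, b] = [a^ℓ_i, b^ℓ_i]` under the density shifted by `s = F_i(x)`, and mixed monotonicity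
confines `s` to `[g_i(a^j, b^j), g_i(b^j, a^j)]` for `x ∈ Q_j`. Because `f` is symmetric and
unimodal about `c`, so is `h` about `s* = (a + b)/2 - c`: `h'(s) = f(a - s) - f(b - s)` has the
sign of `s* - s`. So `h` decreases with `|s - s*|`, and over the interval it is largest at the
projection of `s*` and smallest at the endpoint farthest from `s*`. The bounds follow by
multiplying the nonnegative coordinate factors. -/

open MeasureTheory

/-- Projection of the unconstrained maximizing shift `s` onto the interval `[lo, hi]`. -/
noncomputable def projShift (lo hi s : ℝ) : ℝ :=
  if s < lo then lo else if hi < s then hi else s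

/-- Endpoint of `[lo, hi]` farthest from the unconstrained maximizing shift `s`. -/
noncomputable def farShift (lo hi s : ℝ) : ℝ :=
  if (lo + hi) / 2 ≤ s then lo else hi

open Set

lemma abs_projShift_sub_le {lo hi s v : ℝ} (hlo : lo ≤ v) (hhi : v ≤ hi) :
    |projShift lo hi s - s| ≤ |v - s| := by
  unfold projShift
  split_ifs with hs_lo hs_hi
  · exact abs_le_abs_of_nonneg (by linarith) (by linarith)
  · rw [abs_sub_comm, abs_sub_comm v]
    exact abs_le_abs_of_nonneg (by linarith) (by linarith)
  · simp

lemma abs_sub_le_abs_farShift_sub {lo hi s v : ℝ} (hlo : lo ≤ v) (hhi : v ≤ hi) :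
    |v - s| ≤ |farShift lo hi s - s| := by
  unfold farShift
  split_ifs with hs
  · rw [abs_sub_comm lo, abs_of_nonneg (by linarith : 0 ≤ s - lo), abs_le]
    constructor <;> linarith
  · rw [abs_of_pos (by linarith : 0 < hi - s), abs_le]
    constructor <;> linarith

lemma le_of_abs_sub_le_of_antitoneOn_Ici {f : ℝ → ℝ} {c : ℝ}
    (hsym : ∀ x, f (c - x) = f (c + x)) (hanti : AntitoneOn f (Ici c)) {u v : ℝ}
    (huv : |u - c| ≤ |v - c|) : f v ≤ f u := by
  have radial : ∀ y, f y = f (c + |y - c|) := fun y => by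
    rcases abs_choice (y - c) with h | h <;> rw [h]
    · ring_nf
    · rw [← hsym]; ring_nf
  rw [radial u, radial v]
  exact hanti (by simp) (by simp) (by linarith)

lemma hasDerivAt_integral_comp_sub {f : ℝ → ℝ} (hf : Continuous f) (a b s : ℝ) :
    HasDerivAt (fun s => ∫ t in a..b, f (t - s)) (f (a - s) - f (b - s)) s := by
  have primitive : ∀ x, HasDerivAt (fun u => ∫ t in (0 : ℝ)..u, f t) (f x) x := fun x =>
    (hf.integral_hasStrictDerivAt 0 x).hasDerivAt
  have hsplit : (fun s => ∫ t in a..b, f (t - s)) =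
      fun s => (∫ t in (0 : ℝ)..b - s, f t) - ∫ t in (0 : ℝ)..a - s, f t := by
    funext s
    rw [intervalIntegral.integral_comp_sub_right,
      intervalIntegral.integral_interval_sub_left (hf.intervalIntegrable _ _)
        (hf.intervalIntegrable _ _)]
  rw [hsplit]
  exact (((primitive (b - s)).comp s ((hasDerivAt_id s).const_sub b)).sub
    ((primitive (a - s)).comp s ((hasDerivAt_id s).const_sub a))).congr_deriv (by ring)

lemma integral_comp_sub_symm {f : ℝ → ℝ} {c : ℝ} (hsym : ∀ x, f (c - x) = f (c + x))
    (a b x : ℝ) :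
    ∫ t in a..b, f (t - ((a + b) / 2 - c - x)) = ∫ t in a..b, f (t - ((a + b) / 2 - c + x)) := by
  have reflect := intervalIntegral.integral_comp_sub_left (a := a) (b := b)
    (fun t => f (t - ((a + b) / 2 - c + x))) (a + b)
  rw [add_sub_cancel_right, add_sub_cancel_left] at reflect
  rw [← reflect]
  congr 1; funext t
  rw [show t - ((a + b) / 2 - c - x) = c + (t - (a + b) / 2 + x) by ring,
    show a + b - t - ((a + b) / 2 - c + x) = c - (t - (a + b) / 2 + x) by ring, hsym]

lemma antitoneOn_integral_comp_sub {f : ℝ → ℝ} {c : ℝ} (hf : Continuous f)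
    (hsym : ∀ x, f (c - x) = f (c + x)) (hanti : AntitoneOn f (Ici c)) {a b : ℝ} (hab : a ≤ b) :
    AntitoneOn (fun s => ∫ t in a..b, f (t - s)) (Ici ((a + b) / 2 - c)) := by
  have hderiv := hasDerivAt_integral_comp_sub hf a b
  refine antitoneOn_of_deriv_nonpos (convex_Ici _)
    (fun s _ => (hderiv s).continuousAt.continuousWithinAt)
    (fun s _ => (hderiv s).differentiableAt.differentiableWithinAt) fun s hs => ?_
  rw [interior_Ici, mem_Ioi] at hs
  -- the window `[a - s, b - s]` has its midpoint left of `c`, so its right end is closer to `c`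
  have hcloser : |b - s - c| ≤ |a - s - c| :=
    abs_le.2 ⟨by linarith [neg_abs_le (a - s - c)], by linarith [neg_le_abs (a - s - c)]⟩
  rw [(hderiv s).deriv, sub_nonpos]
  exact le_of_abs_sub_le_of_antitoneOn_Ici hsym hanti hcloser

lemma integral_comp_sub_le_of_abs_le {f : ℝ → ℝ} {c : ℝ} (hf : Continuous f)
    (hsym : ∀ x, f (c - x) = f (c + x)) (hanti : AntitoneOn f (Ici c)) {a b : ℝ} (hab : a ≤ b)
    ⦃s s' : ℝ⦄ (hss' : |s - ((a + b) / 2 - c)| ≤ |s' - ((a + b) / 2 - c)|) :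
    ∫ t in a..b, f (t - s') ≤ ∫ t in a..b, f (t - s) :=
  le_of_abs_sub_le_of_antitoneOn_Ici (f := fun s => ∫ t in a..b, f (t - s))
    (integral_comp_sub_symm hsym a b) (antitoneOn_integral_comp_sub hf hsym hanti hab) hss'

lemma apply_self_mem_Icc_of_mixedMonotone {α β : Type*} [Preorder α] [Preorder β]
    {g : α → α → β} (hmono1 : ∀ x₁ x₂ y, x₁ ≤ x₂ → g x₁ y ≤ g x₂ y)
    (hmono2 : ∀ x y₁ y₂, y₁ ≤ y₂ → g x y₂ ≤ g x y₁) {a b x : α} (hx : x ∈ Icc a b) :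
    g x x ∈ Icc (g a b) (g b a) :=
  ⟨(hmono1 a x b hx.1).trans (hmono2 x x b hx.2), (hmono1 x b x hx.2).trans (hmono2 b a x hx.1)⟩

theorem stmt_18_general {n : ℕ}
    (F : (Fin n → ℝ) → (Fin n → ℝ))
    (g : (Fin n → ℝ) → (Fin n → ℝ) → (Fin n → ℝ))
    (hdec : ∀ x, F x = g x x)
    (hmono1 : ∀ x₁ x₂ y, x₁ ≤ x₂ → g x₁ y ≤ g x₂ y)
    (hmono2 : ∀ x y₁ y₂, y₁ ≤ y₂ → g x y₂ ≤ g x y₁)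
    (f : Fin n → ℝ → ℝ) (c : Fin n → ℝ)
    (hdiff : ∀ i, Differentiable ℝ (f i))
    (hnonneg : ∀ i x, 0 ≤ f i x)
    (hsym : ∀ i x, f i (c i - x) = f i (c i + x))
    (hdown : ∀ i, ∀ x > c i, deriv (f i) x ≤ 0)
    (aj bj al bl : Fin n → ℝ) (hj : aj ≤ bj) (hl : al ≤ bl) :
    (∏ i, ∫ t in (al i)..(bl i),
        f i (t - farShift (g aj bj i) (g bj aj i) ((al i + bl i) / 2 - c i))) ≤
      sInf ((fun x => ∏ i, ∫ t in (al i)..(bl i), f i (t - F x i)) ''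
        Set.Icc aj bj) ∧
    sSup ((fun x => ∏ i, ∫ t in (al i)..(bl i), f i (t - F x i)) '' Set.Icc aj bj) ≤
      ∏ i, ∫ t in (al i)..(bl i),
        f i (t - projShift (g aj bj i) (g bj aj i) ((al i + bl i) / 2 - c i)) := by
  have hF : ∀ x ∈ Icc aj bj, ∀ i, F x i ∈ Icc (g aj bj i) (g bj aj i) := fun x hx i => by
    obtain ⟨hlo, hhi⟩ := apply_self_mem_Icc_of_mixedMonotone hmono1 hmono2 hx
    exact hdec x ▸ ⟨hlo i, hhi i⟩
  have hanti : ∀ i, AntitoneOn (f i) (Ici (c i)) := fun i =>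
    antitoneOn_of_deriv_nonpos (convex_Ici _) (hdiff i).continuous.continuousOn
      (hdiff i).differentiableOn fun x hx => hdown i x (by simpa using hx)
  have hmass := fun i =>
    integral_comp_sub_le_of_abs_le (hdiff i).continuous (hsym i) (hanti i) (hl i)
  have hnn : ∀ i s, 0 ≤ ∫ t in (al i)..(bl i), f i (t - s) := fun i s =>
    intervalIntegral.integral_nonneg (hl i) fun t _ => hnonneg i _
  have hne : ((fun x => ∏ i, ∫ t in (al i)..(bl i), f i (t - F x i)) '' Icc aj bj).Nonempty :=
    (nonempty_Icc.2 hj).image _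
  refine ⟨le_csInf hne ?_, csSup_le hne ?_⟩ <;> rintro _ ⟨x, hx, rfl⟩
  · exact Finset.prod_le_prod (fun i _ => hnn i _) fun i _ =>
      hmass i (abs_sub_le_abs_farShift_sub (hF x hx i).1 (hF x hx i).2)
  · exact Finset.prod_le_prod (fun i _ => hnn i _) fun i _ =>
      hmass i (abs_projShift_sub_le (hF x hx i).1 (hF x hx i).2)

/-- Theorem 1 transition bounds. For rectangles `Q_j = [aj,bj]`,
`Q_ℓ = [al,bl]`, mixed monotone `F` with decomposition `g`, and independent symmetric
unimodal component densities `f i` with modes `c i`,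
`Ť = ∏ i ∫ f i (t - s_min) ≤ inf_{x ∈ Q_j} Pr(F x + w ∈ Q_ℓ)` and
`sup_{x ∈ Q_j} Pr(F x + w ∈ Q_ℓ) ≤ T̂ = ∏ i ∫ f i (t - s_max)`, where
`Pr(F x + w ∈ Q_ℓ) = ∏ i ∫ t in al i..bl i, f i (t - F x i)`. -/
theorem stmt_18 {n : ℕ}
    (F : (Fin n → ℝ) → (Fin n → ℝ))
    (g : (Fin n → ℝ) → (Fin n → ℝ) → (Fin n → ℝ))
    (hdec : ∀ x, F x = g x x)
    (hmono1 : ∀ x₁ x₂ y, x₁ ≤ x₂ → g x₁ y ≤ g x₂ y)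
    (hmono2 : ∀ x y₁ y₂, y₁ ≤ y₂ → g x y₂ ≤ g x y₁)
    (f : Fin n → ℝ → ℝ) (c : Fin n → ℝ)
    (hdiff : ∀ i, Differentiable ℝ (f i))
    (hnonneg : ∀ i x, 0 ≤ f i x)
    (hint : ∀ i, Integrable (f i))
    (hone : ∀ i, ∫ x, f i x = 1)
    (hsym : ∀ i x, f i (c i - x) = f i (c i + x))
    (hup : ∀ i, ∀ x < c i, 0 ≤ deriv (f i) x)
    (hdown : ∀ i, ∀ x > c i, deriv (f i) x ≤ 0)
    (aj bj al bl : Fin n → ℝ) (hj : aj ≤ bj) (hl : al ≤ bl) :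
    (∏ i, ∫ t in (al i)..(bl i),
        f i (t - farShift (g aj bj i) (g bj aj i) ((al i + bl i) / 2 - c i))) ≤
      sInf ((fun x => ∏ i, ∫ t in (al i)..(bl i), f i (t - F x i)) ''
        Set.Icc aj bj) ∧
    sSup ((fun x => ∏ i, ∫ t in (al i)..(bl i), f i (t - F x i)) '' Set.Icc aj bj) ≤
      ∏ i, ∫ t in (al i)..(bl i),
        f i (t - projShift (g aj bj i) (g bj aj i) ((al i + bl i) / 2 - c i)) :=
  stmt_18_general F g hdec hmono1 hmono2 f c hdiff hnonneg hsym hdown aj bj al bl hj hl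
end
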